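/- arXiv:1804.00719 — 2 statements merged into one kernel-verified Lean document; each statement's English description precedes it below -/
import Mathlib

section
/- Let X be a K3 surface, L a very ample line bundle on X, H ∈ |L|, and D a nonzero effective divisor on X with D^2 ≥ H^2. If D^2 = 2H.D - H^2 - 4, |D - H| = ∅, and h^1(O_X(2H - D)) = 0, then D^2 ≤ 2H^2 - 4. -/
/-!
Abstract divisor theory of a complex algebraic K3 surface, i.e. of a smooth
projective regular surface with trivial canonical bundle.  `Div` is the group
of divisors on the surface, `LinEq` is linear equivalence, `Eff D` means that
`D` is an effective divisor (`D ≥ 0`), `inter` is the intersection pairing,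
and `hᵢ D = dim Hⁱ(X, O_X(D))`.  The axioms record standard facts valid on a
K3 surface: Riemann–Roch `χ(O_X(D)) = D²/2 + 2`, Serre duality for the trivial
canonical bundle, evenness of the intersection form, positivity of very ample
divisors on nonzero effective divisors, etc.
-/
structure K3Surface where
  /-- the group of divisors on the surface -/
  Div : Type
  [grp : AddCommGroup Div]
  /-- linear equivalence of divisors -/
  LinEq : Div → Div → Prop
  /-- `D` is an effective divisor (`D ≥ 0`) -/
  Eff : Div → Prop
  /-- the intersection number `D.E` -/
  inter : Div → Div → ℤ
  /-- `h0 D = dim H⁰(X, O_X(D))` -/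
  h0 : Div → ℕ
  /-- `h1 D = dim H¹(X, O_X(D))` -/
  h1 : Div → ℕ
  /-- `h2 D = dim H²(X, O_X(D))` -/
  h2 : Div → ℕ
  /-- the line bundle `O_X(D)` is very ample -/
  VeryAmple : Div → Prop
  /-- the complete linear system `|D|` is base point free -/
  BasePointFree : Div → Prop
  /-- `D` is a smooth irreducible curve on the surface -/
  SmoothIrredCurve : Div → Prop
  /-- `D` is an irreducible curve on the surface -/
  IrredCurve : Div → Prop
  linEq_refl : ∀ D, LinEq D D
  linEq_symm : ∀ {D E}, LinEq D E → LinEq E D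
  linEq_trans : ∀ {D E G}, LinEq D E → LinEq E G → LinEq D G
  linEq_add : ∀ {D E} (G : Div), LinEq D E → LinEq (D + G) (E + G)
  inter_comm : ∀ D E, inter D E = inter E D
  inter_add_left : ∀ D E G, inter (D + E) G = inter D G + inter E G
  inter_linEq_left : ∀ {D E} (G), LinEq D E → inter D G = inter E G
  inter_self_even : ∀ D, Even (inter D D)
  h0_linEq : ∀ {D E}, LinEq D E → h0 D = h0 E
  h1_linEq : ∀ {D E}, LinEq D E → h1 D = h1 E
  serre_h2 : ∀ D, h2 D = h0 (-D)
  serre_h1 : ∀ D, h1 D = h1 (-D)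
  riemann_roch : ∀ D, 2 * ((h0 D : ℤ) - h1 D + h2 D) = inter D D + 4
  h0_zero : h0 0 = 1
  h1_zero : h1 0 = 0
  eff_zero : Eff 0
  eff_add : ∀ {D E}, Eff D → Eff E → Eff (D + E)
  /-- `|D| ≠ ∅` iff the class of `D` contains an effective divisor -/
  h0_pos_iff : ∀ D, 0 < h0 D ↔ ∃ E, Eff E ∧ LinEq E D
  eff_linEq_zero : ∀ {D}, Eff D → LinEq D 0 → D = 0
  veryAmple_pos : ∀ {L D}, VeryAmple L → Eff D → D ≠ 0 → 0 < inter L D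
  smoothIrredCurve_irred : ∀ {D}, SmoothIrredCurve D → IrredCurve D
  irredCurve_eff : ∀ {D}, IrredCurve D → Eff D ∧ D ≠ 0

attribute [instance] K3Surface.grp

namespace K3Surface

variable (X : K3Surface)

/-- `O_X(D)` is an ACM line bundle with respect to the polarization `O_X(L)`:
`H¹(X, O_X(D) ⊗ O_X(L)^{⊗ l}) = 0` for every integer `l`. -/
def IsACM (L D : X.Div) : Prop := ∀ l : ℤ, X.h1 (D + l • L) = 0

/-- `O_X(D)` is initialized with respect to the polarization `O_X(L)`:
`H⁰(X, O_X(D)) ≠ 0` and `H⁰(X, O_X(D) ⊗ O_X(L)^∨) = 0`. -/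
def IsInitialized (L D : X.Div) : Prop := 0 < X.h0 D ∧ X.h0 (D - L) = 0

/-- `Δ` is the fixed component of the linear system `|D|`: an effective divisor
contained in every member of `|D|`, and the largest such. -/
def IsFixedComponent (D Δ : X.Div) : Prop :=
  X.Eff Δ ∧ (∀ E, X.LinEq E D → X.Eff E → X.Eff (E - Δ)) ∧
    ∀ Δ', X.Eff Δ' → (∀ E, X.LinEq E D → X.Eff E → X.Eff (E - Δ')) → X.Eff (Δ - Δ')

/-- `|D|` is an elliptic pencil: a base point free pencil (`h⁰ = 2`) whose general
member is a smooth irreducible curve of genus one (on a K3 surface a smooth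
irreducible curve `E` has genus `E²/2 + 1`, so genus one means `E² = 0`). -/
def IsEllipticPencil (D : X.Div) : Prop :=
  X.BasePointFree D ∧ X.h0 D = 2 ∧
    ∃ E, X.LinEq E D ∧ X.SmoothIrredCurve E ∧ X.inter E E = 0

/-- `D` is an elliptic curve on the surface: an irreducible curve of arithmetic
genus one, equivalently an irreducible curve with `D² = 0`. -/
def IsEllipticCurve (D : X.Div) : Prop := X.IrredCurve D ∧ X.inter D D = 0

end K3Surface

/-- **Inequality (16).**  Let `L` be very ample, `H ∈ |L|`, and `D` a nonzero
effective divisor with `D² ≥ H²`.  If `D² = 2 H.D - H² - 4`, `|D - H| = ∅` and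
`h¹(O_X(2H - D)) = 0`, then `D² ≤ 2H² - 4`. -/
theorem sq_le_two_sq_sub_four (X : K3Surface) (L H D : X.Div)
    (hL : X.VeryAmple L) (hHeff : X.Eff H) (hHL : X.LinEq H L)
    (hDeff : X.Eff D) (hD0 : D ≠ 0)
    (hge : X.inter D D ≥ X.inter H H)
    (heq : X.inter D D = 2 * X.inter H D - X.inter H H - 4)
    (hDH : X.h0 (D - H) = 0)
    (h1v : X.h1 (2 • H - D) = 0) :
    X.inter D D ≤ 2 * X.inter H H - 4 := by
  have hz : ∀ G : X.Div, X.inter 0 G = 0 := by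
    intro G
    have := X.inter_add_left 0 0 G
    rw [add_zero] at this
    omega
  have hneg : ∀ A G : X.Div, X.inter (-A) G = - X.inter A G := by
    intro A G
    have := X.inter_add_left A (-A) G
    rw [add_neg_cancel, hz] at this
    omega
  -- h0 (D - 2•H) = 0
  have h02 : X.h0 (D - 2 • H) = 0 := by
    by_contra h
    have hpos : 0 < X.h0 (D - 2 • H) := Nat.pos_of_ne_zero h
    obtain ⟨E, hEeff, hElin⟩ := (X.h0_pos_iff _).mp hpos
    have hlin : X.LinEq (E + H) (D - 2 • H + H) := X.linEq_add H hElin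
    have heq2 : D - 2 • H + H = D - H := by abel
    rw [heq2] at hlin
    have : 0 < X.h0 (D - H) :=
      (X.h0_pos_iff _).mpr ⟨E + H, X.eff_add hEeff hHeff, hlin⟩
    omega
  have h2v : X.h2 (2 • H - D) = 0 := by
    rw [X.serre_h2]
    have : -(2 • H - D) = D - 2 • H := by abel
    rw [this, h02]
  have hrr := X.riemann_roch (2 • H - D)
  rw [h1v, h2v] at hrr
  push_cast at hrr
  -- expand intersection
  have haddr : ∀ A B G : X.Div, X.inter A (B + G) = X.inter A B + X.inter A G := by
    intro A B G
    rw [X.inter_comm, X.inter_add_left, X.inter_comm B A, X.inter_comm G A]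
  have hnegr : ∀ A G : X.Div, X.inter A (-G) = - X.inter A G := by
    intro A G
    rw [X.inter_comm, hneg, X.inter_comm]
  have hexp : X.inter (2 • H - D) (2 • H - D)
      = 4 * X.inter H H - 4 * X.inter H D + X.inter D D := by
    have e1 : (2 • H - D : X.Div) = H + (H + -D) := by abel
    rw [e1]
    simp only [X.inter_add_left, haddr, hneg, hnegr, X.inter_comm D H]
    ring
  rw [hexp] at hrr
  have hnn : (0:ℤ) ≤ X.h0 (2 • H - D) := Int.natCast_nonneg _
  omega
end

section
/- Let g and d be integers with g ≥ 3 and 3 ≤ d ≤ ⌊(g+3)/2⌋, and let X be a K3 surface with Pic(X) = Z[C] ⊕ Z[F], where C is a smooth curve of genus g and F is an elliptic curve with C.F = d, so that C^2 = 2g - 2 and F^2 = 0. Then Pic(X) contains a class of self-intersection -2 if and only if d divides g. -/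
/-!
Writing a class as `a C + b F`, its square is `2a(a(g - 1) + bd)`. This equals `-2` only if
`a = ±1`, and then `bd = ∓g`; conversely `C - kF` has square `-2` when `g = kd`.
-/

namespace K3Surface

variable (X : K3Surface)

lemma inter_add_right (D E G : X.Div) : X.inter D (E + G) = X.inter D E + X.inter D G := by
  rw [X.inter_comm, X.inter_add_left, X.inter_comm E, X.inter_comm G]

lemma inter_zsmul_left (a : ℤ) (D G : X.Div) : X.inter (a • D) G = a * X.inter D G :=
  map_zsmul (AddMonoidHom.mk' (X.inter · G) (X.inter_add_left · · G)) a D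

lemma inter_zsmul_right (a : ℤ) (D G : X.Div) : X.inter D (a • G) = a * X.inter D G := by
  rw [X.inter_comm, X.inter_zsmul_left, X.inter_comm]

lemma inter_self_of_linEq {D E : X.Div} (h : X.LinEq D E) : X.inter D D = X.inter E E := by
  rw [X.inter_linEq_left D h, X.inter_comm, X.inter_linEq_left E h]

lemma inter_self_zsmul_add_zsmul (a b : ℤ) (D E : X.Div) (hE : X.inter E E = 0) :
    X.inter (a • D + b • E) (a • D + b • E) = a ^ 2 * X.inter D D + 2 * a * b * X.inter D E := by
  simp only [X.inter_add_left, X.inter_add_right, X.inter_zsmul_left, X.inter_zsmul_right,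
    X.inter_comm E D, hE]
  ring

end K3Surface

theorem Int.exists_sq_mul_add_eq_neg_two_iff_dvd (g d : ℤ) :
    (∃ a b : ℤ, a ^ 2 * (2 * g - 2) + 2 * a * b * d = -2) ↔ d ∣ g := by
  constructor
  · rintro ⟨a, b, h⟩
    have hunit : a * (a * (g - 1) + b * d) = -1 := by linarith
    rcases Int.eq_one_or_neg_one_of_mul_eq_neg_one hunit with rfl | rfl
    · exact ⟨-b, by linarith⟩
    · exact ⟨b, by linarith⟩
  · rintro ⟨k, rfl⟩
    exact ⟨1, -k, by ring⟩

theorem exists_neg_two_class_iff_general (X : K3Surface) (g d : ℤ)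
    (C F : X.Div)
    (hCC : X.inter C C = 2 * g - 2)
    (hF : X.IsEllipticCurve F) (hCF : X.inter C F = d)
    (hbasis : ∀ x : X.Div, ∃ a b : ℤ, X.LinEq x (a • C + b • F)) :
    (∃ x : X.Div, X.inter x x = -2) ↔ d ∣ g := by
  have hsq (a b : ℤ) :
      X.inter (a • C + b • F) (a • C + b • F) = a ^ 2 * (2 * g - 2) + 2 * a * b * d := by
    rw [X.inter_self_zsmul_add_zsmul a b C F hF.2, hCC, hCF]
  rw [← Int.exists_sq_mul_add_eq_neg_two_iff_dvd]
  constructor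
  · rintro ⟨x, hx⟩
    obtain ⟨a, b, hab⟩ := hbasis x
    exact ⟨a, b, by rw [← hsq, ← X.inter_self_of_linEq hab, hx]⟩
  · rintro ⟨a, b, hab⟩
    exact ⟨a • C + b • F, by rw [hsq, hab]⟩

/-- Let `X` be a K3 surface with `Pic(X) = ℤ[C] ⊕ ℤ[F]`, where `C` is a smooth
curve of genus `g` (so `C² = 2g - 2`) and `F` is an elliptic curve (so `F² = 0`)
with `C.F = d`, `g ≥ 3`, `3 ≤ d ≤ ⌊(g+3)/2⌋`.  Then `Pic(X)` contains a class of
self-intersection `-2` iff `d ∣ g`. -/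
theorem exists_neg_two_class_iff (X : K3Surface) (g d : ℤ)
    (hg : 3 ≤ g) (hd3 : 3 ≤ d) (hd : d ≤ (g + 3) / 2)
    (C F : X.Div)
    (hC : X.SmoothIrredCurve C) (hCC : X.inter C C = 2 * g - 2)
    (hF : X.IsEllipticCurve F) (hCF : X.inter C F = d)
    (hbasis : ∀ x : X.Div, ∃ a b : ℤ, X.LinEq x (a • C + b • F))
    (hindep : ∀ a b : ℤ, X.LinEq (a • C + b • F) 0 → a = 0 ∧ b = 0) :
    (∃ x : X.Div, X.inter x x = -2) ↔ d ∣ g :=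
  exists_neg_two_class_iff_general X g d C F hCC hF hCF hbasis
end
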